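/- Let T, n, p ∈ ℕ, let Xᵗ ∈ ℝ^{n×p} and Yᵗ ∈ ℝⁿ for t = 1,…,T, and let μ, λ > 0 with μ > √T·λ. Then every global minimizer (Θ_c*, Θ_s*) of the Dirty-model objective F(Θ_c, Θ_s) = Σ_{t=1}^T (1/(2n))‖Xᵗ(θ_cᵗ + θ_sᵗ) − Yᵗ‖₂² + μ‖Θ_c‖_{2,1} + λ‖Θ_s‖₁ satisfies Θ_c* = 0. -/

import Mathlib

open scoped BigOperators

/-- Dirty multi-task objective:
`F(Θc, Θs) = ∑ t, (1/(2n)) ‖Xᵗ (θcᵗ + θsᵗ) - Yᵗ‖₂² + μ ‖Θc‖_{2,1} + λ ‖Θs‖₁`. -/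
noncomputable def dirtyObj {T n p : ℕ} (X : Fin T → Matrix (Fin n) (Fin p) ℝ)
    (Y : Fin T → Fin n → ℝ) (μ lam : ℝ)
    (Θc Θs : Matrix (Fin p) (Fin T) ℝ) : ℝ :=
  (∑ t, (1 / (2 * (n : ℝ))) *
      ∑ i, ((X t).mulVec (fun j => Θc j t + Θs j t) i - Y t i) ^ 2)
    + μ * ∑ j, Real.sqrt (∑ t, (Θc j t) ^ 2)
    + lam * ∑ j, ∑ t, |Θs j t|

/-!
Moving the common part into the task-specific part, i.e. replacing `(Θc, Θs)` by
`(0, Θc + Θs)`, leaves the loss unchanged, removes the penalty `μ ‖Θc‖_{2,1}` and raises the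
`ℓ₁` penalty by at most `λ ‖Θc‖₁ ≤ √T λ ‖Θc‖_{2,1}` (Cauchy–Schwarz on each row). So the
objective drops by at least `(μ - √T λ) ‖Θc‖_{2,1}`, and at a minimizer `‖Θc‖_{2,1} = 0`.
-/

theorem sum_abs_le_sqrt_card_mul_sqrt_sum_sq {ι : Type*} [Fintype ι] (a : ι → ℝ) :
    ∑ i, |a i| ≤ √(Fintype.card ι) * √(∑ i, a i ^ 2) := by
  simpa [mul_comm, sq_abs] using
    Real.sum_mul_le_sqrt_mul_sqrt Finset.univ (fun i => |a i|) (fun _ => 1)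

namespace Matrix

variable {m k : Type*} [Fintype m] [Fintype k]

noncomputable def l21Norm (Θ : Matrix m k ℝ) : ℝ := ∑ j, √(∑ t, Θ j t ^ 2)

noncomputable def l1Norm (Θ : Matrix m k ℝ) : ℝ := ∑ j, ∑ t, |Θ j t|

theorem l21Norm_nonneg (Θ : Matrix m k ℝ) : 0 ≤ l21Norm Θ :=
  Finset.sum_nonneg fun _ _ => Real.sqrt_nonneg _

theorem l21Norm_eq_zero_iff {Θ : Matrix m k ℝ} : l21Norm Θ = 0 ↔ Θ = 0 := by
  simp only [l21Norm, Finset.sum_eq_zero_iff_of_nonneg (fun j _ => Real.sqrt_nonneg _),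
    Real.sqrt_eq_zero (Finset.sum_nonneg fun _ _ => sq_nonneg _),
    Finset.sum_eq_zero_iff_of_nonneg (fun _ _ => sq_nonneg _), Finset.mem_univ, true_implies,
    pow_eq_zero_iff two_ne_zero]
  exact ⟨fun h => Matrix.ext h, fun h j t => by simp [h]⟩

theorem l1Norm_add_le (A B : Matrix m k ℝ) : l1Norm (A + B) ≤ l1Norm A + l1Norm B := by
  simp only [l1Norm, ← Finset.sum_add_distrib]
  exact Finset.sum_le_sum fun j _ => Finset.sum_le_sum fun t _ => abs_add_le _ _

theorem l1Norm_le_sqrt_card_mul_l21Norm (Θ : Matrix m k ℝ) :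
    l1Norm Θ ≤ √(Fintype.card k) * l21Norm Θ := by
  rw [l21Norm, Finset.mul_sum]
  exact Finset.sum_le_sum fun j _ => sum_abs_le_sqrt_card_mul_sqrt_sum_sq (Θ j)

end Matrix

open Matrix

noncomputable def dirtyLoss {T n p : ℕ} (X : Fin T → Matrix (Fin n) (Fin p) ℝ)
    (Y : Fin T → Fin n → ℝ) (Θ : Matrix (Fin p) (Fin T) ℝ) : ℝ :=
  ∑ t, (1 / (2 * (n : ℝ))) * ∑ i, ((X t).mulVec (fun j => Θ j t) i - Y t i) ^ 2

section Dirty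

variable {T n p : ℕ} (X : Fin T → Matrix (Fin n) (Fin p) ℝ) (Y : Fin T → Fin n → ℝ) (μ lam : ℝ)

theorem dirtyObj_eq (Θc Θs : Matrix (Fin p) (Fin T) ℝ) :
    dirtyObj X Y μ lam Θc Θs = dirtyLoss X Y (Θc + Θs) + μ * l21Norm Θc + lam * l1Norm Θs :=
  rfl

theorem dirtyObj_zero_add_add_le (hlam : 0 ≤ lam) (Θc Θs : Matrix (Fin p) (Fin T) ℝ) :
    dirtyObj X Y μ lam 0 (Θc + Θs) + (μ - √T * lam) * l21Norm Θc ≤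
      dirtyObj X Y μ lam Θc Θs := by
  have hl1 : l1Norm (Θc + Θs) ≤ √T * l21Norm Θc + l1Norm Θs := by
    simpa using (l1Norm_add_le Θc Θs).trans
      (add_le_add_left (l1Norm_le_sqrt_card_mul_l21Norm Θc) _)
  have hl21 : l21Norm (0 : Matrix (Fin p) (Fin T) ℝ) = 0 := l21Norm_eq_zero_iff.2 rfl
  rw [dirtyObj_eq, dirtyObj_eq, zero_add, hl21]
  linarith [mul_le_mul_of_nonneg_left hl1 hlam]

end Dirty

theorem dirty_mu_gt_sqrtT_lam_common_part_zero {T n p : ℕ}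
    (X : Fin T → Matrix (Fin n) (Fin p) ℝ) (Y : Fin T → Fin n → ℝ)
    (μ lam : ℝ) (hlam : 0 < lam) (h : Real.sqrt T * lam < μ) :
    ∀ Θc Θs : Matrix (Fin p) (Fin T) ℝ,
      (∀ Θc' Θs' : Matrix (Fin p) (Fin T) ℝ,
          dirtyObj X Y μ lam Θc Θs ≤ dirtyObj X Y μ lam Θc' Θs') →
      Θc = 0 := by
  intro Θc Θs hmin
  have hdrop := (dirtyObj_zero_add_add_le X Y μ lam hlam.le Θc Θs).trans (hmin 0 (Θc + Θs))
  have hnonpos : l21Norm Θc ≤ 0 :=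
    nonpos_of_mul_nonpos_right (by linarith) (sub_pos.2 h)
  exact l21Norm_eq_zero_iff.1 (le_antisymm hnonpos (l21Norm_nonneg Θc))
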